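/- Let p ≥ 1 be an integer, let x₁, …, x_p be the p distinct roots of the Legendre polynomial L_p, and define the weights w_k = ∫_{−1}^{1} ∏_{j≠k} (x − x_j)/(x_k − x_j) dx for k = 1, …, p. Then the p-point Gauss–Legendre quadrature rule Q̂_p(g) = Σ_{k=1}^{p} w_k·g(x_k) is exact of degree 2p − 1, i.e., Σ_{k=1}^{p} w_k·q(x_k) = ∫_{−1}^{1} q(x) dx for every polynomial q of degree ≤ 2p − 1. -/

import Mathlib

/-- The Legendre polynomial `L_n` on `ℝ`, defined via the Rodrigues formula. -/
noncomputable def legendre (n : ℕ) : ℝ → ℝ :=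
  fun x => (1 / ((2 : ℝ) ^ n * (n.factorial : ℝ))) *
    iteratedDeriv n (fun y => (y ^ 2 - 1) ^ n) x

/-!
The nodal polynomial `N = ∏ (X - x_k)` of the roots of `L_p` is a nonzero multiple of
`D^p (X² - 1)^p`, so `p` integrations by parts, whose boundary terms vanish because `±1` are
`p`-fold roots of `(X² - 1)^p`, show that `N` is orthogonal on `[-1, 1]` to every polynomial of
degree `< p`. Dividing `q` by `N` as `q = r + N s` with `deg r, deg s < p`, the rule is exact on
`r` because it integrates the Lagrange interpolant of `r`, and both sides vanish on `N s`.
-/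

open Polynomial intervalIntegral Finset

namespace Polynomial

theorem iteratedDeriv_eval {𝕜 : Type*} [NontriviallyNormedField 𝕜] (p : 𝕜[X]) (n : ℕ) :
    iteratedDeriv n (fun x => p.eval x) = fun x => (derivative^[n] p).eval x := by
  induction n generalizing p with
  | zero => simp
  | succ n ih =>
    rw [iteratedDeriv_succ', Function.iterate_succ_apply, ← ih (derivative p)]
    congr 1
    funext x
    exact p.deriv

theorem integral_eval_mul_eval_iterate_derivative_eq_zero {f s : ℝ[X]} {a b : ℝ} {n : ℕ}
    (ha : (X - C a) ^ n ∣ f) (hb : (X - C b) ^ n ∣ f) (hs : derivative^[n] s = 0) :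
    ∫ t in a..b, s.eval t * (derivative^[n] f).eval t = 0 := by
  induction n generalizing s with
  | zero => simp_all
  | succ n ih =>
    have boundary : ∀ c, (X - C c) ^ (n + 1) ∣ f → (derivative^[n] f).eval c = 0 :=
      fun c hc => by simpa [dvd_iff_isRoot] using pow_sub_dvd_iterate_derivative_of_pow_dvd n hc
    have hpow : ∀ c, (X - C c) ^ (n + 1) ∣ f → (X - C c) ^ n ∣ f :=
      fun c => (pow_dvd_pow _ n.le_succ).trans
    rw [Function.iterate_succ_apply',
      integral_mul_deriv_eq_deriv_mul (fun t _ => s.hasDerivAt t)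
        (fun t _ => (derivative^[n] f).hasDerivAt t)
        (s.derivative.continuous.intervalIntegrable _ _)
        ((derivative (derivative^[n] f)).continuous.intervalIntegrable _ _)]
    rw [boundary a ha, boundary b hb,
      ih (hpow a ha) (hpow b hb) (by rwa [← Function.iterate_succ_apply])]
    ring

end Polynomial

namespace Lagrange

variable {ι : Type*} {s : Finset ι} {v : ι → ℝ}

theorem nodal_eq_C_inv_leadingCoeff_mul {P : ℝ[X]} (hvs : Set.InjOn v s) (hP : P ≠ 0)
    (hdeg : P.natDegree ≤ #s) (hroot : ∀ i ∈ s, P.IsRoot (v i)) :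
    nodal s v = C P.leadingCoeff⁻¹ * P := by
  have hdvd : nodal s v ∣ P :=
    prod_dvd_of_coprime
      (fun i hi j hj hij =>
        isCoprime_X_sub_C_of_isUnit_sub (sub_ne_zero_of_ne (hvs.ne hi hj hij)).isUnit)
      (fun i hi => dvd_iff_isRoot.2 (hroot i hi))
  have hP_eq := eq_leadingCoeff_mul_of_monic_of_dvd_of_natDegree_le nodal_monic hdvd
    (by rwa [natDegree_nodal])
  calc nodal s v = C (P.leadingCoeff⁻¹ * P.leadingCoeff) * nodal s v := by
        rw [inv_mul_cancel₀ (leadingCoeff_ne_zero.2 hP), C_1, one_mul]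
    _ = C P.leadingCoeff⁻¹ * P := by rw [C_mul, mul_assoc, ← hP_eq]

variable [DecidableEq ι] {a b : ℝ}

theorem eval_basis (i : ι) (t : ℝ) :
    (Lagrange.basis s v i).eval t = ∏ j ∈ s.erase i, (t - v j) / (v i - v j) := by
  simp only [Lagrange.basis, basisDivisor, eval_prod, eval_mul, eval_C, eval_sub, eval_X]
  exact prod_congr rfl fun j _ => by rw [div_eq_inv_mul]

theorem sum_integral_basis_mul_eval (hvs : Set.InjOn v s) {q : ℝ[X]} (hq : q.degree < #s) :
    ∑ i ∈ s, (∫ t in a..b, (Lagrange.basis s v i).eval t) * q.eval (v i) =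
      ∫ t in a..b, q.eval t := by
  conv_rhs => rw [eq_interpolate hvs hq, interpolate_apply]
  simp only [eval_finsetSum, eval_mul, eval_C]
  rw [integral_finsetSum fun i _ => (by fun_prop : Continuous _).intervalIntegrable _ _]
  exact sum_congr rfl fun i _ => by rw [integral_const_mul, mul_comm]

theorem sum_integral_basis_mul_eval_of_orthogonal (hvs : Set.InjOn v s) {m : ℕ}
    (horth : ∀ r : ℝ[X], r.degree < m → ∫ t in a..b, r.eval t * (nodal s v).eval t = 0)
    {q : ℝ[X]} (hq : q.degree < #s + m) :
    ∑ i ∈ s, (∫ t in a..b, (Lagrange.basis s v i).eval t) * q.eval (v i) =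
      ∫ t in a..b, q.eval t := by
  set N := nodal s v
  have hquot : (q /ₘ N).degree < m := by
    by_cases hlt : q.degree < N.degree
    · rw [(divByMonic_eq_zero_iff nodal_monic).2 hlt, degree_zero]
      exact WithBot.bot_lt_coe m
    · have hsum := degree_add_divByMonic nodal_monic (not_lt.1 hlt)
      rw [degree_nodal] at hsum
      exact (WithBot.add_lt_add_iff_left (WithBot.natCast_ne_bot #s)).1 (hsum ▸ hq)
  have hrem : (q %ₘ N).degree < #s :=
    degree_nodal (s := s) (v := v) ▸ degree_modByMonic_lt q nodal_monic
  have hq_eq : ∀ t, q.eval t = (q %ₘ N).eval t + (q /ₘ N).eval t * N.eval t := fun t => by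
    rw [← eval_mul, mul_comm, ← eval_add, modByMonic_add_div]
  have hnode : ∀ i ∈ s, q.eval (v i) = (q %ₘ N).eval (v i) := fun i hi => by
    rw [hq_eq, eval_nodal_at_node hi, mul_zero, add_zero]
  calc ∑ i ∈ s, (∫ t in a..b, (Lagrange.basis s v i).eval t) * q.eval (v i)
      = ∑ i ∈ s, (∫ t in a..b, (Lagrange.basis s v i).eval t) * (q %ₘ N).eval (v i) :=
        sum_congr rfl fun i hi => by rw [hnode i hi]
    _ = ∫ t in a..b, (q %ₘ N).eval t := sum_integral_basis_mul_eval hvs hrem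
    _ = (∫ t in a..b, (q %ₘ N).eval t) + ∫ t in a..b, (q /ₘ N).eval t * N.eval t := by
        rw [horth _ hquot, add_zero]
    _ = ∫ t in a..b, q.eval t := by
        rw [← integral_add (Continuous.intervalIntegrable (by fun_prop) _ _)
          (Continuous.intervalIntegrable (by fun_prop) _ _)]
        exact integral_congr fun t _ => (hq_eq t).symm

end Lagrange

noncomputable def rodrigues (n : ℕ) : ℝ[X] := derivative^[n] ((X ^ 2 - 1) ^ n)

theorem legendre_eq_eval_rodrigues (n : ℕ) (x : ℝ) :
    legendre n x = 1 / (2 ^ n * n.factorial) * (rodrigues n).eval x := by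
  have hfun : (fun y : ℝ => (y ^ 2 - 1) ^ n) = fun y => ((X ^ 2 - 1) ^ n : ℝ[X]).eval y := by
    simp
  rw [legendre, hfun, iteratedDeriv_eval, rodrigues]

theorem isRoot_rodrigues_of_legendre_eq_zero {n : ℕ} {x : ℝ} (hx : legendre n x = 0) :
    (rodrigues n).IsRoot x := by
  rw [legendre_eq_eval_rodrigues] at hx
  exact (mul_eq_zero.1 hx).resolve_left (by positivity)

theorem monic_X_sq_sub_one_pow (n : ℕ) : ((X ^ 2 - 1 : ℝ[X]) ^ n).Monic := by
  simpa using ((monic_X_pow_sub_C (1 : ℝ) two_ne_zero).pow n)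

theorem natDegree_X_sq_sub_one_pow (n : ℕ) : ((X ^ 2 - 1 : ℝ[X]) ^ n).natDegree = 2 * n := by
  rw [natDegree_pow, ← C_1, natDegree_X_pow_sub_C, mul_comm]

theorem rodrigues_ne_zero (n : ℕ) : rodrigues n ≠ 0 := by
  have hcoeff : (rodrigues n).coeff n = (n + n).descFactorial n := by
    rw [rodrigues, coeff_iterate_derivative, ← two_mul, ← natDegree_X_sq_sub_one_pow n,
      coeff_natDegree, (monic_X_sq_sub_one_pow n).leadingCoeff, nsmul_one]
  intro h
  rw [h, coeff_zero] at hcoeff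
  exact (Nat.descFactorial_pos.2 (Nat.le_add_left n n)).ne (by exact_mod_cast hcoeff)

theorem natDegree_rodrigues_le (n : ℕ) : (rodrigues n).natDegree ≤ n :=
  (natDegree_iterate_derivative _ n).trans (by rw [natDegree_X_sq_sub_one_pow]; omega)

theorem integral_eval_mul_eval_rodrigues_eq_zero {n : ℕ} {r : ℝ[X]} (hr : r.degree < n) :
    ∫ t in (-1 : ℝ)..1, r.eval t * (rodrigues n).eval t = 0 := by
  have hfactor : (X ^ 2 - 1 : ℝ[X]) = (X - C (-1)) * (X - C 1) := by
    simp only [map_neg, C_1]; ring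
  refine integral_eval_mul_eval_iterate_derivative_eq_zero ?_ ?_
    (iterate_derivative_eq_zero_of_degree_lt hr)
  · exact pow_dvd_pow_of_dvd (hfactor ▸ dvd_mul_right _ _) n
  · exact pow_dvd_pow_of_dvd (hfactor ▸ dvd_mul_left _ _) n

/-- Let `x₁, …, x_p` be the `p` distinct roots of the Legendre polynomial
`L_p`, and let `w_k = ∫_{-1}^1 ∏_{j ≠ k} (t - x_j)/(x_k - x_j) dt`. Then the `p`-point
Gauss–Legendre quadrature rule is exact of degree `2p - 1`. -/
theorem statement13 (p : ℕ) (hp : 1 ≤ p) (x : Fin p → ℝ)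
    (hxinj : Function.Injective x) (hxroot : ∀ k, legendre p (x k) = 0)
    (w : Fin p → ℝ)
    (hw : ∀ k, w k = ∫ t in (-1 : ℝ)..1,
      ∏ j ∈ Finset.univ.erase k, (t - x j) / (x k - x j)) :
    ∀ q : Polynomial ℝ, q.natDegree ≤ 2 * p - 1 →
      ∑ k, w k * q.eval (x k) = ∫ t in (-1 : ℝ)..1, q.eval t := by
  intro q hq
  have hnodal : Lagrange.nodal univ x = C (rodrigues p).leadingCoeff⁻¹ * rodrigues p :=
    Lagrange.nodal_eq_C_inv_leadingCoeff_mul hxinj.injOn (rodrigues_ne_zero p)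
      (by simpa using natDegree_rodrigues_le p)
      fun k _ => isRoot_rodrigues_of_legendre_eq_zero (hxroot k)
  have horth : ∀ r : ℝ[X], r.degree < p →
      ∫ t in (-1 : ℝ)..1, r.eval t * (Lagrange.nodal univ x).eval t = 0 := fun r hr => by
    simp_rw [hnodal, eval_mul, eval_C, mul_left_comm (r.eval _)]
    rw [integral_const_mul, integral_eval_mul_eval_rodrigues_eq_zero hr, mul_zero]
  have hdeg : q.degree < #(univ : Finset (Fin p)) + p :=
    degree_le_natDegree.trans_lt (by rw [card_univ, Fintype.card_fin]; exact_mod_cast (by omega))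
  simpa [hw, Lagrange.eval_basis] using
    Lagrange.sum_integral_basis_mul_eval_of_orthogonal hxinj.injOn horth hdeg
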